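/- Let X₁, X₂, ... be independent random variables with distributions F₁, F₂, ..., let Hₖ denote the distribution of X₁ + ⋯ + Xₖ, and let τ be an independent counting random variable with pₖ = P(τ = k), ∑_{k=0}^n pₖ = 1 and pₙ > 0 for some n ≥ 1. Let H_τ = ∑_{k=0}^n pₖ Hₖ be the distribution of the random sum X₁ + ⋯ + X_τ. Then H_τ is long-tailed if and only if Hₙ is long-tailed. -/

import Mathlib

/-!
Every `Hₖ` with `k ≤ n` is dominated by a shift of `Hₙ`: each `Fᵢ` charges some compact interval
`[u, v]`, so `c * Hₖ(A) ≤ Hₙ(A + [u, v])` for all `A`, with `c > 0`. Hence the tail of the mixture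
`H_τ = ∑ pₖ Hₖ` lies between `pₙ H̄ₙ(x)` and a multiple of `H̄ₙ(x - t)`, and its increment
`H_τ(x, x + 1]` is at most a combination of increments of `Hₙ` over boundedly shifted intervals.
A long-tailed `F` has `F̄(x + c) ~ F̄(x)` for every `c`, so that `F(x + a, x + b] = o(F̄(x))`, and
both implications follow.
-/

open MeasureTheory Filter Set Asymptotics

/-- Tail function of a distribution: `F̄(x) = μ(x, ∞)`. -/
noncomputable def tail (μ : Measure ℝ) (x : ℝ) : ℝ := (μ (Set.Ioi x)).toReal

/-- `F(a, b] = F(b) - F(a)`. -/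
noncomputable def intv (μ : Measure ℝ) (a b : ℝ) : ℝ := (μ (Set.Ioc a b)).toReal

/-- A distribution is long-tailed if `F̄(x+1)/F̄(x) → 1` as `x → ∞`. -/
def LongTailed (μ : Measure ℝ) : Prop :=
  Tendsto (fun x => tail μ (x + 1) / tail μ x) atTop (nhds 1)

/-- Convolution of two distributions on ℝ (law of the sum of independent rvs). -/
noncomputable def mconv (μ ν : Measure ℝ) : Measure ℝ :=
  Measure.map (fun p : ℝ × ℝ => p.1 + p.2) (μ.prod ν)

/-- `n`-fold convolution of a distribution with itself; `nconv μ 0` is the unit mass at 0. -/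
noncomputable def nconv (μ : Measure ℝ) : ℕ → Measure ℝ
  | 0 => Measure.dirac 0
  | n + 1 => mconv (nconv μ n) μ

open scoped Pointwise

lemma tail_nonneg (μ : Measure ℝ) (x : ℝ) : 0 ≤ tail μ x := measureReal_nonneg

lemma intv_nonneg (μ : Measure ℝ) (x y : ℝ) : 0 ≤ intv μ x y := measureReal_nonneg

lemma tail_antitone (μ : Measure ℝ) [IsFiniteMeasure μ] : Antitone (tail μ) :=
  fun _ _ h => measureReal_mono (Ioi_subset_Ioi h)

lemma intv_eq_tail_sub_tail (μ : Measure ℝ) [IsFiniteMeasure μ] {x y : ℝ} (h : x ≤ y) :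
    intv μ x y = tail μ x - tail μ y := by
  rw [intv, tail, tail, ← Ioi_sdiff_Ioi]
  exact measureReal_sdiff (Ioi_subset_Ioi h) measurableSet_Ioi

lemma Asymptotics.IsEquivalent.of_le_of_le {α : Type*} {l : Filter α} {f g h k : α → ℝ}
    (hg : g ~[l] k) (hh : h ~[l] k) (hgf : g ≤ f) (hfh : f ≤ h) : f ~[l] k := by
  refine IsBigO.trans_isLittleO (isBigO_of_le l (g := fun x => |g x - k x| + |h x - k x|)
    fun x => ?_) (hg.isLittleO.norm_left.add hh.isLittleO.norm_left)
  rw [Real.norm_eq_abs, Real.norm_of_nonneg (by positivity), Pi.sub_apply, abs_le]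
  constructor <;> linarith [hgf x, hfh x, neg_abs_le (g x - k x), le_abs_self (h x - k x),
    abs_nonneg (g x - k x), abs_nonneg (h x - k x)]

namespace LongTailed

variable {μ : Measure ℝ}

lemma tail_pos [IsFiniteMeasure μ] (h : LongTailed μ) (x : ℝ) : 0 < tail μ x := by
  obtain ⟨y, hy, hxy⟩ := ((h.eventually_ne one_ne_zero).and (eventually_ge_atTop x)).exists
  have hy : tail μ y ≠ 0 := (div_ne_zero_iff.1 hy).2
  exact ((tail_nonneg μ y).lt_of_ne hy.symm).trans_le (tail_antitone μ hxy)

lemma isEquivalent_tail_add_nat (h : LongTailed μ) (m : ℕ) :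
    (fun x => tail μ (x + m)) ~[atTop] tail μ := by
  induction m with
  | zero => simpa using IsEquivalent.refl
  | succ m ih =>
    have hstep := (isEquivalent_of_tendsto_one h).comp_tendsto
      (tendsto_atTop_add_const_right atTop (m : ℝ) tendsto_id)
    simpa [Function.comp_def, add_assoc] using hstep.trans ih

lemma isEquivalent_tail_add [IsFiniteMeasure μ] (h : LongTailed μ) (c : ℝ) :
    (fun x => tail μ (x + c)) ~[atTop] tail μ := by
  obtain ⟨m, hm⟩ : ∃ m : ℕ, |c| ≤ m := ⟨⌈|c|⌉₊, Nat.le_ceil _⟩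
  have hup : (fun x => tail μ (x - m)) ~[atTop] tail μ := by
    have := (h.isEquivalent_tail_add_nat m).comp_tendsto
      (tendsto_atTop_add_const_right atTop (-m : ℝ) tendsto_id)
    simpa [Function.comp_def, ← sub_eq_add_neg] using this.symm
  refine (h.isEquivalent_tail_add_nat m).of_le_of_le hup (fun x => ?_) (fun x => ?_) <;>
    refine tail_antitone μ ?_ <;> linarith [abs_le.1 hm]

lemma isLittleO_intv [IsFiniteMeasure μ] (h : LongTailed μ) {a b : ℝ} (hab : a ≤ b) (s : ℝ) :
    (fun x => intv μ (x + a) (x + b)) =o[atTop] fun x => tail μ (x + s) := by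
  have hshift (c : ℝ) : (fun x => tail μ (x + c)) ~[atTop] fun x => tail μ (x + s) := by
    have := (h.isEquivalent_tail_add (c - s)).comp_tendsto
      (tendsto_atTop_add_const_right atTop s tendsto_id)
    simpa [Function.comp_def, add_assoc] using this
  refine ((hshift a).isLittleO.sub (hshift b).isLittleO).congr_left fun x => ?_
  rw [intv_eq_tail_sub_tail μ (by linarith)]
  simp

end LongTailed

lemma longTailed_of_isLittleO {μ : Measure ℝ} [IsFiniteMeasure μ] (hpos : ∀ x, 0 < tail μ x)
    (h : (fun x => intv μ x (x + 1)) =o[atTop] tail μ) : LongTailed μ := by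
  have hequiv : (fun x => tail μ (x + 1)) ~[atTop] tail μ := by
    refine h.neg_left.congr_left fun x => ?_
    rw [intv_eq_tail_sub_tail μ (by linarith)]
    simp
  exact (isEquivalent_iff_tendsto_one (.of_forall fun x => (hpos x).ne')).1 hequiv

instance (μ ν : Measure ℝ) [IsFiniteMeasure μ] [IsFiniteMeasure ν] :
    IsFiniteMeasure (mconv μ ν) := by
  unfold mconv; infer_instance

instance (μ ν : Measure ℝ) [IsProbabilityMeasure μ] [IsProbabilityMeasure ν] :
    IsProbabilityMeasure (mconv μ ν) :=
  Measure.isProbabilityMeasure_map (measurable_fst.add measurable_snd).aemeasurable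

lemma measure_mul_le_mconv (μ ν : Measure ℝ) [SFinite ν] (s t : Set ℝ) :
    μ s * ν t ≤ mconv μ ν (s + t) := by
  rw [← Measure.prod_prod]
  refine (measure_mono fun q hq => ?_).trans
    (Measure.le_map_apply (measurable_fst.add measurable_snd).aemeasurable _)
  exact add_mem_add hq.1 hq.2

lemma measureReal_mul_le_mconv (μ ν : Measure ℝ) [IsFiniteMeasure μ] [IsFiniteMeasure ν]
    (s t : Set ℝ) : μ.real s * ν.real t ≤ (mconv μ ν).real (s + t) := by
  rw [measureReal_def, measureReal_def, measureReal_def, ← ENNReal.toReal_mul]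
  exact ENNReal.toReal_mono (measure_ne_top _ _) (measure_mul_le_mconv μ ν s t)

lemma exists_measure_Icc_ne_zero (μ : Measure ℝ) [NeZero μ] : ∃ u v, μ (Icc u v) ≠ 0 := by
  by_contra! h
  have hcover : (univ : Set ℝ) ⊆ ⋃ m : ℕ, Icc (-m : ℝ) m := fun x _ =>
    let ⟨m, hm⟩ := exists_nat_ge |x|
    mem_iUnion.2 ⟨m, abs_le.1 hm⟩
  exact NeZero.ne μ (Measure.measure_univ_eq_zero.1
    (measure_mono_null hcover (measure_iUnion_null fun m => h _ _)))

section Domination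

variable {μ ν : Measure ℝ} {u v c : ℝ}

lemma mul_tail_le_tail_add [IsFiniteMeasure ν]
    (h : ∀ A, c * μ.real A ≤ ν.real (A + Icc u v)) (x : ℝ) :
    c * tail μ x ≤ tail ν (x + u) := by
  refine (h _).trans (measureReal_mono ?_)
  rintro _ ⟨a, ha, b, hb, rfl⟩
  exact add_lt_add_of_lt_of_le ha hb.1

lemma mul_intv_le_intv_add [IsFiniteMeasure ν]
    (h : ∀ A, c * μ.real A ≤ ν.real (A + Icc u v)) (x y : ℝ) :
    c * intv μ x y ≤ intv ν (x + u) (y + v) := by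
  refine (h _).trans (measureReal_mono ?_)
  rintro _ ⟨a, ha, b, hb, rfl⟩
  exact ⟨add_lt_add_of_lt_of_le ha.1 hb.1, add_le_add ha.2 hb.2⟩

end Domination

section PartialSums

variable {F H : ℕ → Measure ℝ}

lemma isProbabilityMeasure_of_eq_mconv [∀ i, IsProbabilityMeasure (F i)]
    (hH : ∀ k, H (k + 1) = mconv (H k) (F (k + 1))) (hH0 : H 0 = Measure.dirac 0) (k : ℕ) :
    IsProbabilityMeasure (H k) := by
  induction k with
  | zero => rw [hH0]; infer_instance
  | succ k ih => rw [hH k]; infer_instance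

lemma exists_mul_measureReal_le_add_Icc [∀ i, IsFiniteMeasure (F i)] [∀ i, NeZero (F i)]
    [∀ k, IsFiniteMeasure (H k)] (hH : ∀ k, H (k + 1) = mconv (H k) (F (k + 1)))
    {k n : ℕ} (hkn : k ≤ n) :
    ∃ u v c : ℝ, u ≤ v ∧ 0 < c ∧ ∀ A, c * (H k).real A ≤ (H n).real (A + Icc u v) := by
  induction n, hkn using Nat.le_induction with
  | base => exact ⟨0, 0, 1, le_rfl, one_pos, fun A => by simp⟩
  | succ m _ ih =>
    obtain ⟨u, v, c, huv, hc, hle⟩ := ih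
    obtain ⟨u', v', hF⟩ := exists_measure_Icc_ne_zero (F (m + 1))
    have huv' : u' ≤ v' := nonempty_Icc.1 (nonempty_of_measure_ne_zero hF)
    have hFpos : 0 < (F (m + 1)).real (Icc u' v') :=
      ENNReal.toReal_pos hF (measure_ne_top _ _)
    refine ⟨u + u', v + v', c * (F (m + 1)).real (Icc u' v'), add_le_add huv huv',
      mul_pos hc hFpos, fun A => ?_⟩
    calc c * (F (m + 1)).real (Icc u' v') * (H k).real A
        = c * (H k).real A * (F (m + 1)).real (Icc u' v') := by ring
      _ ≤ (H m).real (A + Icc u v) * (F (m + 1)).real (Icc u' v') := by gcongr; exact hle A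
      _ ≤ (H (m + 1)).real (A + Icc u v + Icc u' v') := by
        rw [hH m]; exact measureReal_mul_le_mconv _ _ _ _
      _ ≤ (H (m + 1)).real (A + Icc (u + u') (v + v')) := by
        rw [add_assoc]; exact measureReal_mono (add_subset_add_left (Icc_add_Icc_subset _ _ _ _))

end PartialSums

instance {α : Type*} [MeasurableSpace α] (μ : Measure α) [IsFiniteMeasure μ] (r : ℝ) :
    IsFiniteMeasure (ENNReal.ofReal r • μ) :=
  μ.smul_finite ENNReal.ofReal_ne_top

section Mixture

variable {ι : Type*} {s : Finset ι} {μ : ι → Measure ℝ} {p : ι → ℝ}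

lemma measureReal_mixture [∀ k, IsFiniteMeasure (μ k)] (hp : ∀ k ∈ s, 0 ≤ p k) (A : Set ℝ) :
    (∑ k ∈ s, ENNReal.ofReal (p k) • μ k).real A = ∑ k ∈ s, p k * (μ k).real A := by
  rw [measureReal_def, Measure.finsetSum_apply, ENNReal.toReal_sum]
  · refine Finset.sum_congr rfl fun k hk => ?_
    rw [Measure.smul_apply, smul_eq_mul, ENNReal.toReal_mul, ENNReal.toReal_ofReal (hp k hk),
      measureReal_def]
  · exact fun _ _ => ENNReal.mul_ne_top ENNReal.ofReal_ne_top (measure_ne_top _ _)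

lemma tail_mixture [∀ k, IsFiniteMeasure (μ k)] (hp : ∀ k ∈ s, 0 ≤ p k) (x : ℝ) :
    tail (∑ k ∈ s, ENNReal.ofReal (p k) • μ k) x = ∑ k ∈ s, p k * tail (μ k) x :=
  measureReal_mixture hp _

lemma intv_mixture [∀ k, IsFiniteMeasure (μ k)] (hp : ∀ k ∈ s, 0 ≤ p k) (x y : ℝ) :
    intv (∑ k ∈ s, ENNReal.ofReal (p k) • μ k) x y = ∑ k ∈ s, p k * intv (μ k) x y :=
  measureReal_mixture hp _

lemma mul_measureReal_le_mixture [∀ k, IsFiniteMeasure (μ k)] (hp : ∀ k ∈ s, 0 ≤ p k)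
    {i : ι} (hi : i ∈ s) (A : Set ℝ) :
    p i * (μ i).real A ≤ (∑ k ∈ s, ENNReal.ofReal (p k) • μ k).real A := by
  rw [measureReal_mixture hp]
  exact Finset.single_le_sum (fun k hk => mul_nonneg (hp k hk) measureReal_nonneg) hi

lemma exists_tail_mixture_le [∀ k, IsFiniteMeasure (μ k)] (hp : ∀ k ∈ s, 0 ≤ p k)
    {ν : Measure ℝ} (h : ∀ k ∈ s, ∃ t C, ∀ x, tail (μ k) (x + t) ≤ C * tail ν x) :
    ∃ t C, ∀ x, tail (∑ k ∈ s, ENNReal.ofReal (p k) • μ k) (x + t) ≤ C * tail ν x := by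
  have hev : ∀ k ∈ s, ∀ᶠ q : ℝ × ℝ in atTop, ∀ x, tail (μ k) (x + q.1) ≤ q.2 * tail ν x := by
    intro k hk
    obtain ⟨t, C, hk⟩ := h k hk
    filter_upwards [eventually_ge_atTop (t, C)] with q hq x
    calc tail (μ k) (x + q.1) ≤ tail (μ k) (x + t) := tail_antitone _ (by linarith [hq.1])
      _ ≤ C * tail ν x := hk x
      _ ≤ q.2 * tail ν x := by gcongr; exacts [tail_nonneg _ _, hq.2]
  obtain ⟨q, hq⟩ := ((eventually_all_finset s).2 hev).exists
  refine ⟨q.1, (∑ k ∈ s, p k) * q.2, fun x => ?_⟩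
  rw [tail_mixture hp, Finset.sum_mul, Finset.sum_mul]
  exact Finset.sum_le_sum fun k hk => by
    rw [mul_assoc]; exact mul_le_mul_of_nonneg_left (hq k hk x) (hp k hk)

end Mixture

lemma LongTailed.of_tail_le_of_intv_le {μ ν : Measure ℝ} [IsFiniteMeasure μ] [IsFiniteMeasure ν]
    (hμ : LongTailed μ) {s C p : ℝ} (hp : 0 < p)
    (htail : ∀ x, tail μ (x + s) ≤ C * tail ν x)
    (hintv : ∀ x, p * intv ν x (x + 1) ≤ intv μ x (x + 1)) : LongTailed ν := by
  have hpos (x : ℝ) : 0 < C * tail ν x := (hμ.tail_pos _).trans_le (htail x)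
  have hC : 0 < C := pos_of_mul_pos_left (hpos 0) (tail_nonneg _ _)
  refine longTailed_of_isLittleO (fun x => pos_of_mul_pos_right (hpos x) hC.le) ?_
  have hνμ : (fun x => intv ν x (x + 1)) =O[atTop] fun x => intv μ x (x + 1) :=
    isBigO_of_le' _ (c := p⁻¹) fun x => by
      rw [Real.norm_of_nonneg (intv_nonneg _ _ _), Real.norm_of_nonneg (intv_nonneg _ _ _),
        le_inv_mul_iff₀ hp]
      exact hintv x
  have hμν : (fun x => tail μ (x + s)) =O[atTop] tail ν :=
    isBigO_of_le' _ (c := C) fun x => by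
      rw [Real.norm_of_nonneg (tail_nonneg _ _), Real.norm_of_nonneg (tail_nonneg _ _)]
      exact htail x
  have hμ_intv := hμ.isLittleO_intv zero_le_one s
  simp only [add_zero] at hμ_intv
  exact hνμ.trans_isLittleO (hμ_intv.trans_isBigO hμν)

lemma LongTailed.of_tail_le_of_intv_le_sum {ι : Type*} {μ ν : Measure ℝ} [IsFiniteMeasure μ]
    [IsFiniteMeasure ν] (hν : LongTailed ν) {p : ℝ} (hp : 0 < p)
    (htail : ∀ x, p * tail ν x ≤ tail μ x) {s : Finset ι} (c a b : ι → ℝ)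
    (hab : ∀ i ∈ s, a i ≤ b i)
    (hintv : ∀ x, intv μ x (x + 1) ≤ ∑ i ∈ s, c i * intv ν (x + a i) (x + b i)) :
    LongTailed μ := by
  have hpos (x : ℝ) : 0 < tail μ x := (mul_pos hp (hν.tail_pos x)).trans_le (htail x)
  refine longTailed_of_isLittleO hpos ?_
  have hsum : (fun x => ∑ i ∈ s, c i * intv ν (x + a i) (x + b i)) =o[atTop] tail ν :=
    IsLittleO.fun_sum fun i hi => by
      simpa using (hν.isLittleO_intv (hab i hi) 0).const_mul_left (c i)
  have hμsum : (fun x => intv μ x (x + 1)) =O[atTop]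
      fun x => ∑ i ∈ s, c i * intv ν (x + a i) (x + b i) :=
    isBigO_of_le _ fun x => by
      rw [Real.norm_of_nonneg (intv_nonneg _ _ _)]
      exact (hintv x).trans (le_abs_self _)
  have hνμ : tail ν =O[atTop] tail μ :=
    isBigO_of_le' _ (c := p⁻¹) fun x => by
      rw [Real.norm_of_nonneg (tail_nonneg _ _), Real.norm_of_nonneg (tail_nonneg _ _),
        le_inv_mul_iff₀ hp]
      exact htail x
  exact hμsum.trans_isLittleO (hsum.trans_isBigO hνμ)

lemma longTailed_mixture_iff {ι : Type*} {s : Finset ι} {μ : ι → Measure ℝ} {p : ι → ℝ}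
    [∀ k, IsFiniteMeasure (μ k)] (hp : ∀ k ∈ s, 0 ≤ p k) {i : ι} (hi : i ∈ s) (hpi : 0 < p i)
    (hdom : ∀ k ∈ s, ∃ u v c : ℝ, u ≤ v ∧ 0 < c ∧
      ∀ A, c * (μ k).real A ≤ (μ i).real (A + Icc u v)) :
    LongTailed (∑ k ∈ s, ENNReal.ofReal (p k) • μ k) ↔ LongTailed (μ i) := by
  choose! u v c huv hc hle using hdom
  constructor
  · intro hM
    obtain ⟨t, C, htail⟩ := exists_tail_mixture_le hp (ν := μ i) fun k hk =>
      ⟨-u k, (c k)⁻¹, fun x => by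
        rw [le_inv_mul_iff₀ (hc k hk)]
        simpa using mul_tail_le_tail_add (hle k hk) (x + -u k)⟩
    exact hM.of_tail_le_of_intv_le hpi htail fun x => mul_measureReal_le_mixture hp hi _
  · intro hμi
    refine hμi.of_tail_le_of_intv_le_sum hpi (fun x => mul_measureReal_le_mixture hp hi _)
      (fun k => p k / c k) u (fun k => 1 + v k) (fun k hk => by linarith [huv k hk]) fun x => ?_
    rw [intv_mixture hp]
    refine Finset.sum_le_sum fun k hk => ?_
    calc p k * intv (μ k) x (x + 1) = p k / c k * (c k * intv (μ k) x (x + 1)) := by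
          field_simp [(hc k hk).ne']
      _ ≤ p k / c k * intv (μ i) (x + u k) (x + 1 + v k) :=
          mul_le_mul_of_nonneg_left (mul_intv_le_intv_add (hle k hk) x (x + 1))
            (div_nonneg (hp k hk) (hc k hk).le)
      _ = p k / c k * intv (μ i) (x + u k) (x + (1 + v k)) := by rw [add_assoc]

theorem stmt10_general (F : ℕ → Measure ℝ) [∀ i, IsProbabilityMeasure (F i)]
    (H : ℕ → Measure ℝ) (hH0 : H 0 = Measure.dirac 0)
    (hH : ∀ k, H (k + 1) = mconv (H k) (F (k + 1)))
    (n : ℕ) (p : ℕ → ℝ) (hp0 : ∀ k, 0 ≤ p k)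
    (hpn : 0 < p n) :
    LongTailed (∑ k ∈ Finset.range (n + 1), ENNReal.ofReal (p k) • H k) ↔
      LongTailed (H n) := by
  have := isProbabilityMeasure_of_eq_mconv hH hH0
  exact longTailed_mixture_iff (fun k _ => hp0 k) (Finset.self_mem_range_succ n) hpn
    fun k hk => exists_mul_measureReal_le_add_Icc hH (Finset.mem_range_succ_iff.1 hk)

/-- Random sum with a bounded-support counting variable: the compound distribution
H_tau = sum_k p_k H_k is long-tailed iff H_n is long-tailed, where H_k is the law of
X_1 + ... + X_k for independent X_i with laws F_i. -/
theorem stmt10 (F : ℕ → Measure ℝ) [∀ i, IsProbabilityMeasure (F i)]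
    (hFpos : ∀ i, ∃ x, 0 < tail (F i) x)
    (H : ℕ → Measure ℝ) (hH0 : H 0 = Measure.dirac 0)
    (hH : ∀ k, H (k + 1) = mconv (H k) (F (k + 1)))
    (n : ℕ) (hn : 1 ≤ n) (p : ℕ → ℝ) (hp0 : ∀ k, 0 ≤ p k)
    (hsum : ∑ k ∈ Finset.range (n + 1), p k = 1) (hpn : 0 < p n) :
    LongTailed (∑ k ∈ Finset.range (n + 1), ENNReal.ofReal (p k) • H k) ↔
      LongTailed (H n) :=
  stmt10_general F H hH0 hH n p hp0 hpn
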